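/- Let M be a 12-vertex 6-dimensional weak pseudomanifold with complementarity, let α be a facet of M, and for 0 ≤ j ≤ 2 let e_j be the number of (7−j)-element faces of M meeting α in exactly 6−j vertices. If the link of every 4-element face disjoint from α is a 2-sphere, then e_0 = 7, e_1 = 51, e_2 = 139. -/
import Mathlib


open Finset

/-- `K` is an (abstract) simplicial complex: faces are nonempty finite sets,
closed under passing to nonempty subsets. -/
def IsComplex {V : Type} [DecidableEq V] (K : Finset (Finset V)) : Prop :=
  (∀ σ ∈ K, σ.Nonempty) ∧ ∀ σ ∈ K, ∀ τ ⊆ σ, τ.Nonempty → τ ∈ K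

/-- `K` is pure of dimension `d`: every face has at most `d+1` vertices and is
contained in a face with exactly `d+1` vertices (a facet). -/
def IsPure {V : Type} [DecidableEq V] (d : ℕ) (K : Finset (Finset V)) : Prop :=
  (∀ σ ∈ K, σ.card ≤ d + 1) ∧ ∀ σ ∈ K, ∃ γ ∈ K, σ ⊆ γ ∧ γ.card = d + 1

/-- `K` is a `d`-dimensional weak pseudomanifold: a pure `d`-dimensional simplicial
complex (with at least one facet) in which every `(d-1)`-face (i.e. `d`-element face)
is contained in exactly two facets. -/
def IsWPM {V : Type} [DecidableEq V] (d : ℕ) (K : Finset (Finset V)) : Prop :=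
  IsComplex K ∧ IsPure d K ∧ (∃ σ ∈ K, σ.card = d + 1) ∧
    ∀ σ ∈ K, σ.card = d → (K.filter fun γ => γ.card = d + 1 ∧ σ ⊆ γ).card = 2

/-- Complementarity: exactly one of each complementary pair of nonempty subsets
of the vertex set is a face. -/
def Complementarity {V : Type} [DecidableEq V] [Fintype V] (K : Finset (Finset V)) : Prop :=
  ∀ A : Finset V, A.Nonempty → Aᶜ.Nonempty → (A ∈ K ↔ Aᶜ ∉ K)

/-- The link of `σ` in `K`: all faces `τ` disjoint from `σ` with `σ ∪ τ` a face. -/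
def lk {V : Type} [DecidableEq V] (K : Finset (Finset V)) (σ : Finset V) :
    Finset (Finset V) :=
  K.filter fun τ => σ ∩ τ = ∅ ∧ σ ∪ τ ∈ K

/-- The vertex set of a simplicial complex. -/
def vertSet {V : Type} [DecidableEq V] [Fintype V] (K : Finset (Finset V)) : Finset V :=
  Finset.univ.filter fun v => ({v} : Finset V) ∈ K

/-- Euler characteristic of a simplicial complex. -/
def eulerChar {V : Type} [DecidableEq V] (K : Finset (Finset V)) : ℤ :=
  ∑ σ ∈ K, (-1 : ℤ) ^ (σ.card - 1)

/-- A simplicial complex is connected if any two of its vertices are joined by a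
path of edges. -/
def ComplexConnected {V : Type} [DecidableEq V] [Fintype V] (L : Finset (Finset V)) : Prop :=
  ∀ u ∈ vertSet L, ∀ v ∈ vertSet L,
    Relation.ReflTransGen (fun a b : V => ({a, b} : Finset V) ∈ L) u v

/-- `L` is a circle (cycle complex): a connected 1-dimensional simplicial complex in
which every vertex lies in exactly two edges. -/
def IsCycle {V : Type} [DecidableEq V] [Fintype V] (L : Finset (Finset V)) : Prop :=
  IsComplex L ∧ (∀ σ ∈ L, σ.card ≤ 2) ∧ (∃ σ ∈ L, σ.card = 2) ∧
    (∀ v ∈ vertSet L, (L.filter fun e => e.card = 2 ∧ v ∈ e).card = 2) ∧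
    ComplexConnected L

/-- `L` is a closed combinatorial 2-manifold: a 2-dimensional simplicial complex in
which the link of every vertex is a circle. -/
def IsClosed2Mfd {V : Type} [DecidableEq V] [Fintype V] (L : Finset (Finset V)) : Prop :=
  IsComplex L ∧ (∀ σ ∈ L, σ.card ≤ 3) ∧ (∃ σ ∈ L, σ.card = 3) ∧
    ∀ v ∈ vertSet L, IsCycle (lk L {v})

/-- `L` is a combinatorial 2-sphere: a connected closed combinatorial 2-manifold of
Euler characteristic 2. -/
def Is2Sphere {V : Type} [DecidableEq V] [Fintype V] (L : Finset (Finset V)) : Prop :=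
  IsClosed2Mfd L ∧ ComplexConnected L ∧ eulerChar L = 2

/-- The degree of a face: the number of vertices of its link. -/
def degFace {V : Type} [DecidableEq V] [Fintype V] (K : Finset (Finset V))
    (σ : Finset V) : ℕ :=
  (vertSet (lk K σ)).card

section Aux
open Finset
variable {V : Type} [DecidableEq V] [Fintype V]

lemma tri_edges (L : Finset (Finset V)) (hC : IsComplex L)
    (t : Finset V) (ht : t ∈ L) (htc : t.card = 3) :
    (L.filter fun f => f.card = 2 ∧ f ⊆ t).card = 3 := by
  have h : L.filter (fun f => f.card = 2 ∧ f ⊆ t) = t.powersetCard 2 := by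
    ext f
    simp only [mem_filter, mem_powersetCard]
    constructor
    · rintro ⟨_, h2, hs⟩; exact ⟨hs, h2⟩
    · rintro ⟨hs, h2⟩
      exact ⟨hC.2 t ht f hs (by rw [← card_pos, h2]; norm_num), h2, hs⟩
  rw [h, card_powersetCard, htc]; decide

lemma edge_tris (L : Finset (Finset V))
    (hL : IsClosed2Mfd L) (e : Finset V) (he : e ∈ L) (hec : e.card = 2) :
    (L.filter fun t => t.card = 3 ∧ e ⊆ t).card = 2 := by
  obtain ⟨u, v, huv, rfl⟩ := Finset.card_eq_two.mp hec
  have hu : ({u} : Finset V) ∈ L := hL.1.2 _ he {u} (by simp) (singleton_nonempty u)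
  have hv : ({v} : Finset V) ∈ L := hL.1.2 _ he {v} (by simp) (singleton_nonempty v)
  have huV : u ∈ vertSet L := by simp [vertSet, hu]
  have hvlk : ({v} : Finset V) ∈ lk L {u} := by
    simp only [lk, mem_filter]
    refine ⟨hv, ?_, ?_⟩
    · simp [Finset.singleton_inter_of_notMem, huv]
    · simpa using he
  have hvV : v ∈ vertSet (lk L {u}) := by simp [vertSet, hvlk]
  have hcyc := (hL.2.2.2 u huV).2.2.2.1 v hvV
  rw [← hcyc]
  apply Finset.card_bij (fun t _ => t.erase u)
  · rintro t ht
    simp only [mem_filter] at ht ⊢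
    obtain ⟨htL, htc, hst⟩ := ht
    have hut : u ∈ t := hst (by simp)
    have hvt : v ∈ t := hst (by simp)
    have h1 : t.erase u ∈ L := hL.1.2 t htL _ (erase_subset u t)
      (by rw [← card_pos, card_erase_of_mem hut, htc]; norm_num)
    refine ⟨?_, by rw [card_erase_of_mem hut, htc], by simp [huv.symm, hvt]⟩
    simp only [lk, mem_filter]
    refine ⟨h1, by simp, ?_⟩
    have : {u} ∪ t.erase u = t := by
      rw [← insert_eq, insert_erase hut]
    rw [this]; exact htL
  · rintro t1 h1 t2 h2 heq
    simp only [mem_filter] at h1 h2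
    have hu1 : u ∈ t1 := h1.2.2 (by simp)
    have hu2 : u ∈ t2 := h2.2.2 (by simp)
    rw [← insert_erase hu1, ← insert_erase hu2, heq]
  · rintro f hf
    simp only [mem_filter, lk] at hf
    obtain ⟨⟨hfL, hfd, hfu⟩, hfc, hvf⟩ := hf
    have hunf : u ∉ f := by
      intro h; have : u ∈ ({u} : Finset V) ∩ f := by simp [h]
      rw [hfd] at this; simp at this
    refine ⟨insert u f, ?_, by simp [hunf]⟩
    simp only [mem_filter]
    have : {u} ∪ f = insert u f := (insert_eq u f).symm
    rw [this] at hfu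
    refine ⟨hfu, by rw [card_insert_of_notMem hunf, hfc], ?_⟩
    intro w hw
    simp only [mem_insert] at hw ⊢
    rcases hw with h | h
    · left; exact h
    · right; simp at h; subst h; exact hvf

lemma euler_split (L : Finset (Finset V)) (hc : ∀ σ ∈ L, σ.card = 1 ∨ σ.card = 2 ∨ σ.card = 3) :
    ∑ σ ∈ L, (-1 : ℤ) ^ (σ.card - 1)
      = ((L.filter fun σ => σ.card = 1).card : ℤ)
        - (L.filter fun σ => σ.card = 2).card + (L.filter fun σ => σ.card = 3).card := by
  rw [← Finset.sum_filter_add_sum_filter_not L (fun σ => σ.card = 1),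
      ← Finset.sum_filter_add_sum_filter_not (L.filter fun σ => ¬ σ.card = 1)
        (fun σ => σ.card = 2), filter_filter, filter_filter]
  have h2 : L.filter (fun σ => ¬σ.card = 1 ∧ σ.card = 2) = L.filter (fun σ => σ.card = 2) := by
    apply filter_congr; intro σ hσ
    constructor
    · exact fun h => h.2
    · exact fun h => ⟨by omega, h⟩
  have h3 : L.filter (fun σ => ¬σ.card = 1 ∧ ¬σ.card = 2) = L.filter (fun σ => σ.card = 3) := by
    apply filter_congr; intro σ hσ
    have := hc σ hσ
    constructor
    · intro h; omega
    · intro h; omega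
  rw [h2, h3]
  have e1 : ∑ σ ∈ L.filter (fun σ => σ.card = 1), (-1:ℤ)^(σ.card-1)
      = ((L.filter fun σ => σ.card = 1).card : ℤ) := by
    rw [show ((L.filter fun σ => σ.card = 1).card : ℤ) = ∑ _σ ∈ L.filter (fun σ => σ.card = 1), (1:ℤ) by simp]
    apply Finset.sum_congr rfl
    intro σ hσ; rw [(mem_filter.mp hσ).2]; norm_num
  have e2 : ∑ σ ∈ L.filter (fun σ => σ.card = 2), (-1:ℤ)^(σ.card-1)
      = -((L.filter fun σ => σ.card = 2).card : ℤ) := by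
    rw [show -((L.filter fun σ => σ.card = 2).card : ℤ) = ∑ _σ ∈ L.filter (fun σ => σ.card = 2), (-1:ℤ) by simp]
    apply Finset.sum_congr rfl
    intro σ hσ; rw [(mem_filter.mp hσ).2]; norm_num
  have e3 : ∑ σ ∈ L.filter (fun σ => σ.card = 3), (-1:ℤ)^(σ.card-1)
      = ((L.filter fun σ => σ.card = 3).card : ℤ) := by
    rw [show ((L.filter fun σ => σ.card = 3).card : ℤ) = ∑ _σ ∈ L.filter (fun σ => σ.card = 3), (1:ℤ) by simp]
    apply Finset.sum_congr rfl
    intro σ hσ; rw [(mem_filter.mp hσ).2]; norm_num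
  rw [e1, e2, e3]; ring

lemma double_count (L : Finset (Finset V))
    (hedge : ∀ e ∈ L, e.card = 2 → (L.filter fun t => t.card = 3 ∧ e ⊆ t).card = 2)
    (htri : ∀ t ∈ L, t.card = 3 → (L.filter fun f => f.card = 2 ∧ f ⊆ t).card = 3) :
    2 * (L.filter fun σ => σ.card = 2).card = 3 * (L.filter fun σ => σ.card = 3).card := by
  set E := L.filter fun σ => σ.card = 2 with hE
  set T := L.filter fun σ => σ.card = 3 with hT
  have key : ∑ e ∈ E, ∑ t ∈ T, (if e ⊆ t then 1 else 0)
      = ∑ t ∈ T, ∑ e ∈ E, (if e ⊆ t then 1 else 0) := Finset.sum_comm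
  have lhs : ∀ e ∈ E, ∑ t ∈ T, (if e ⊆ t then (1:ℕ) else 0) = 2 := by
    intro e he
    rw [← Finset.card_filter]
    rw [mem_filter] at he
    rw [← hedge e he.1 he.2]
    congr 1
    rw [hT, filter_filter]
  have rhs : ∀ t ∈ T, ∑ e ∈ E, (if e ⊆ t then (1:ℕ) else 0) = 3 := by
    intro t ht
    rw [← Finset.card_filter]
    rw [mem_filter] at ht
    rw [← htri t ht.1 ht.2]
    congr 1
    rw [hE, filter_filter]
  rw [Finset.sum_congr rfl lhs, Finset.sum_congr rfl rhs, sum_const, sum_const] at key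
  simp only [smul_eq_mul] at key
  omega

lemma sphere_nums (L : Finset (Finset V)) (hL : Is2Sphere L) :
    ((L.filter fun σ => σ.card = 1).card + (L.filter fun σ => σ.card = 3).card
      = (L.filter fun σ => σ.card = 2).card + 2) ∧
    2 * (L.filter fun σ => σ.card = 2).card = 3 * (L.filter fun σ => σ.card = 3).card := by
  obtain ⟨hmfd, hconn, heuler⟩ := hL
  have hc : ∀ σ ∈ L, σ.card = 1 ∨ σ.card = 2 ∨ σ.card = 3 := by
    intro σ hσ
    have h1 := hmfd.2.1 σ hσ
    have h2 := (hmfd.1.1 σ hσ).card_pos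
    omega
  constructor
  · simp only [eulerChar] at heuler
    rw [euler_split L hc] at heuler
    omega
  · exact double_count L (fun e he h2 => edge_tris L hmfd e he h2)
      (fun t ht h3 => tri_edges L hmfd.1 t ht h3)

end Aux

/-- Lemma 4.10: let `α` be a facet of a 12-vertex 6-dimensional weak
pseudomanifold `M` with complementarity, and for `0 ≤ j ≤ 2` let `e j` be the number
of `(7-j)`-element faces of `M` meeting `α` in exactly `6-j` vertices. If the link of
every 4-element face disjoint from `α` is a combinatorial 2-sphere, then `e 0 = 7`,
`e 1 = 51` and `e 2 = 139`. -/
theorem stmt_15 (M : Finset (Finset (Fin 12))) (hM : IsWPM 6 M)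
    (hvert : ∀ v : Fin 12, ({v} : Finset (Fin 12)) ∈ M)
    (hcomp : Complementarity M)
    (α : Finset (Fin 12)) (hα : α ∈ M) (hαcard : α.card = 7)
    (hlink : ∀ γ ∈ M, γ.card = 4 → γ ∩ α = ∅ → Is2Sphere (lk M γ))
    (e : ℕ → ℕ)
    (he : ∀ j, e j = (M.filter fun δ => δ.card = 7 - j ∧ (δ ∩ α).card = 6 - j).card) :
    e 0 = 7 ∧ e 1 = 51 ∧ e 2 = 139 := by
  classical
  obtain ⟨hMc, hMpure, -, hWPM⟩ := hM
  have hαc5 : (αᶜ).card = 5 := by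
    rw [Finset.card_compl, hαcard]; rfl
  have hαne : α.Nonempty := by rw [← card_pos, hαcard]; norm_num
  have hαcne : (αᶜ).Nonempty := by rw [← card_pos, hαc5]; norm_num
  have hαcnotM : αᶜ ∉ M := (hcomp α hαne hαcne).mp hα
  have hcompl' : ∀ A : Finset (Fin 12), A.Nonempty → Aᶜ.Nonempty → A ∉ M → Aᶜ ∈ M := by
    intro A h1 h2 h3
    by_contra h4
    exact h3 ((hcomp A h1 h2).mpr h4)
  have hsubα : ∀ σ : Finset (Fin 12), σ ⊆ α → σ.Nonempty → σ ∈ M :=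
    fun σ h hn => hMc.2 α hα σ h hn
  -- e 0 = 7
  have he0 : e 0 = 7 := by
    rw [he 0]
    have hbij : (M.filter fun δ => δ.card = 7 - 0 ∧ (δ ∩ α).card = 6 - 0).card
        = (α.powersetCard 6).card := by
      apply Finset.card_bij (fun δ _ => δ ∩ α)
      · intro δ hδ
        rw [mem_filter] at hδ
        exact mem_powersetCard.mpr ⟨inter_subset_right, hδ.2.2⟩
      · intro δ1 h1 δ2 h2 heq
        rw [mem_filter] at h1 h2
        set σ := δ1 ∩ α with hσ
        have hσα : σ ⊆ α := inter_subset_right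
        have hσ6 : σ.card = 6 := h1.2.2
        have hσM : σ ∈ M := hsubα σ hσα (by rw [← card_pos, hσ6]; norm_num)
        have hF := hWPM σ hσM hσ6
        norm_num at hF
        set F := M.filter fun γ => γ.card = 7 ∧ σ ⊆ γ with hFdef
        have hαF : α ∈ F := by
          rw [hFdef, mem_filter]; exact ⟨hα, hαcard, hσα⟩
        have hδ1F : δ1 ∈ F := by
          rw [hFdef, mem_filter]
          exact ⟨h1.1, by simpa using h1.2.1, inter_subset_left⟩
        have hδ2F : δ2 ∈ F := by
          rw [hFdef, mem_filter]
          refine ⟨h2.1, by simpa using h2.2.1, ?_⟩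
          calc σ = δ2 ∩ α := heq
          _ ⊆ δ2 := inter_subset_left
        have hδ1α : δ1 ≠ α := by
          intro h; rw [h] at hσ
          rw [hσ, inter_self, hαcard] at hσ6; exact absurd hσ6 (by norm_num)
        have hδ2α : δ2 ≠ α := by
          intro h
          have : (δ2 ∩ α).card = 7 := by rw [h, inter_self, hαcard]
          rw [h2.2.2] at this; exact absurd this (by norm_num)
        have h1e : δ1 ∈ F.erase α := mem_erase.mpr ⟨hδ1α, hδ1F⟩
        have h2e : δ2 ∈ F.erase α := mem_erase.mpr ⟨hδ2α, hδ2F⟩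
        have : (F.erase α).card ≤ 1 := by
          rw [card_erase_of_mem hαF, hF]
        exact Finset.card_le_one.mp this δ1 h1e δ2 h2e
      · intro σ hσ
        rw [mem_powersetCard] at hσ
        obtain ⟨hσα, hσ6⟩ := hσ
        have hσM : σ ∈ M := hsubα σ hσα (by rw [← card_pos, hσ6]; norm_num)
        have hF := hWPM σ hσM hσ6
        obtain ⟨δ, hδF, hδα⟩ := Finset.exists_mem_ne (by norm_num at hF; rw [hF]; norm_num) α
        rw [mem_filter] at hδF
        obtain ⟨hδM, hδ7, hσδ⟩ := hδF
        have hsub1 : σ ⊆ δ ∩ α := subset_inter hσδ hσα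
        have hle : (δ ∩ α).card ≤ 7 := le_trans (card_le_card inter_subset_right) (le_of_eq hαcard)
        have hne7 : (δ ∩ α).card ≠ 7 := by
          intro h7
          have : δ ∩ α = α := Finset.eq_of_subset_of_card_le inter_subset_right (by omega)
          have hαδ : α ⊆ δ := by rw [← this]; exact inter_subset_left
          exact hδα (Finset.eq_of_subset_of_card_le hαδ (by omega)).symm
        have hge : 6 ≤ (δ ∩ α).card := by
          calc 6 = σ.card := hσ6.symm
          _ ≤ (δ ∩ α).card := card_le_card hsub1
        have hc6 : (δ ∩ α).card = 6 := by omega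
        have : δ ∩ α = σ := (Finset.eq_of_subset_of_card_le hsub1 (by omega)).symm
        exact ⟨δ, mem_filter.mpr ⟨hδM, by simpa using hδ7, by simpa using hc6⟩, this⟩
    rw [hbij, card_powersetCard, hαcard]; decide

  -- facts about the 4-faces αᶜ.erase x
  have hγfacts : ∀ x ∈ αᶜ, (αᶜ.erase x) ∈ M ∧ (αᶜ.erase x).card = 4 ∧ (αᶜ.erase x) ∩ α = ∅ := by
    intro x hx
    have hc4 : (αᶜ.erase x).card = 4 := by rw [card_erase_of_mem hx, hαc5]
    have hdisj : (αᶜ.erase x) ∩ α = ∅ := by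
      ext y
      simp only [mem_inter, mem_erase, mem_compl, notMem_empty, iff_false]
      rintro ⟨⟨-, h1⟩, h2⟩; exact h1 h2
    have hne : (αᶜ.erase x).Nonempty := by rw [← card_pos, hc4]; norm_num
    have hcc : ((αᶜ.erase x)ᶜ).card = 8 := by
      rw [card_compl, Fintype.card_fin, hc4]
    have hnotM : (αᶜ.erase x)ᶜ ∉ M := by
      intro hmem
      have := hMpure.1 _ hmem
      omega
    exact ⟨(hcomp _ hne (by rw [← card_pos, hcc]; norm_num)).mpr hnotM, hc4, hdisj⟩
  have hsph : ∀ x ∈ αᶜ, Is2Sphere (lk M (αᶜ.erase x)) := by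
    intro x hx
    obtain ⟨h1, h2, h3⟩ := hγfacts x hx
    exact hlink _ h1 h2 h3
  have hfaceα : ∀ x ∈ αᶜ, ∀ τ ∈ lk M (αᶜ.erase x), τ ⊆ α := by
    intro x hx τ hτ
    simp only [lk, mem_filter] at hτ
    obtain ⟨hτM, hdisj2, hunion⟩ := hτ
    intro v hv
    by_contra hvα
    have hvc : v ∈ αᶜ := mem_compl.mpr hvα
    have hvnγ : v ∉ αᶜ.erase x := by
      intro h
      have : v ∈ (αᶜ.erase x) ∩ τ := mem_inter.mpr ⟨h, hv⟩
      rw [hdisj2] at this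
      exact notMem_empty v this
    have hvx : v = x := by
      by_contra hne
      exact hvnγ (mem_erase.mpr ⟨hne, hvc⟩)
    have hsub : αᶜ ⊆ (αᶜ.erase x) ∪ τ := by
      intro y hy
      by_cases hyx : y = x
      · subst hyx
        exact mem_union_right _ (hvx ▸ hv)
      · exact mem_union_left _ (mem_erase.mpr ⟨hyx, hy⟩)
    exact hαcnotM (hMc.2 _ hunion αᶜ hsub hαcne)
  -- the key two-way count
  have key : ∀ j, j ≤ 2 → e j
      + ∑ x ∈ αᶜ, ((lk M (αᶜ.erase x)).filter fun τ => τ.card = j + 1).card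
      = 5 * Nat.choose 7 (6 - j) := by
    intro j hj
    set C := (univ : Finset (Finset (Fin 12))).filter
      (fun δ => δ.card = 7 - j ∧ (δ ∩ α).card = 6 - j) with hCdef
    have hsingle : ∀ δ ∈ C, ∃ x, x ∉ α ∧ δ \ α = {x} := by
      intro δ hδ
      rw [hCdef, mem_filter] at hδ
      obtain ⟨-, hd1, hd2⟩ := hδ
      have h3 := Finset.card_inter_add_card_sdiff δ α
      have : (δ \ α).card = 1 := by omega
      obtain ⟨x, hx⟩ := card_eq_one.mp this
      refine ⟨x, ?_, hx⟩
      have : x ∈ δ \ α := by rw [hx]; exact mem_singleton_self x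
      exact (mem_sdiff.mp this).2
    have hfmem : ∀ δ ∈ C, (δ \ α).sum id ∈ αᶜ := by
      intro δ hδ
      obtain ⟨x, hxα, hxe⟩ := hsingle δ hδ
      rw [hxe, sum_singleton]
      exact mem_compl.mpr hxα
    have hrebuild : ∀ (δ : Finset (Fin 12)) (x : Fin 12), δ \ α = {x} →
        δ = insert x (δ ∩ α) := by
      intro δ x h
      have hxδ : x ∈ δ := (mem_sdiff.mp (h ▸ mem_singleton_self x)).1
      ext y
      simp only [mem_insert, mem_inter]
      constructor
      · intro hy
        by_cases hyα : y ∈ α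
        · exact Or.inr ⟨hy, hyα⟩
        · left
          have : y ∈ δ \ α := mem_sdiff.mpr ⟨hy, hyα⟩
          rw [h] at this
          exact mem_singleton.mp this
      · rintro (rfl | ⟨h1, -⟩)
        · exact hxδ
        · exact h1
    have hinsert : ∀ (x : Fin 12), x ∉ α → ∀ β : Finset (Fin 12), β ⊆ α →
        (insert x β) ∩ α = β ∧ (insert x β) \ α = {x} := by
      intro x hxα β hβ
      constructor
      · ext y
        simp only [mem_inter, mem_insert]
        constructor
        · rintro ⟨rfl | h, hy⟩
          · exact absurd hy hxα
          · exact h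
        · exact fun h => ⟨Or.inr h, hβ h⟩
      · ext y
        simp only [mem_sdiff, mem_insert, mem_singleton]
        constructor
        · rintro ⟨rfl | h, hy⟩
          · rfl
          · exact absurd (hβ h) hy
        · rintro rfl
          exact ⟨Or.inl rfl, hxα⟩
    have hCcard : C.card = 5 * Nat.choose 7 (6 - j) := by
      rw [Finset.card_eq_sum_card_fiberwise hfmem]
      have hfib : ∀ x ∈ αᶜ, (C.filter fun δ => (δ \ α).sum id = x).card
          = Nat.choose 7 (6 - j) := by
        intro x hx
        have hxα : x ∉ α := mem_compl.mp hx
        have hb : (C.filter fun δ => (δ \ α).sum id = x).card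
            = (α.powersetCard (6 - j)).card := by
          apply Finset.card_bij (fun δ _ => δ ∩ α)
          · intro δ hδ
            have h1 := (mem_filter.mp hδ).1
            rw [hCdef, mem_filter] at h1
            exact mem_powersetCard.mpr ⟨inter_subset_right, h1.2.2⟩
          · intro δ1 h1 δ2 h2 heq
            obtain ⟨h1C, h1f⟩ := mem_filter.mp h1
            obtain ⟨h2C, h2f⟩ := mem_filter.mp h2
            obtain ⟨x1, hx1α, hx1⟩ := hsingle δ1 h1C
            obtain ⟨x2, hx2α, hx2⟩ := hsingle δ2 h2C
            rw [hx1, sum_singleton] at h1f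
            rw [hx2, sum_singleton] at h2f
            simp only [id_eq] at h1f h2f
            rw [h1f] at hx1
            rw [h2f] at hx2
            rw [hrebuild δ1 x hx1, hrebuild δ2 x hx2, heq]
          · intro β hβ
            rw [mem_powersetCard] at hβ
            obtain ⟨hβα, hβc⟩ := hβ
            obtain ⟨hint, hsd⟩ := hinsert x hxα β hβα
            have hxβ : x ∉ β := fun h => hxα (hβα h)
            refine ⟨insert x β, ?_, hint⟩
            rw [mem_filter, hCdef, mem_filter]
            refine ⟨⟨mem_univ _, ?_, ?_⟩, ?_⟩
            · rw [card_insert_of_notMem hxβ, hβc]; omega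
            · rw [hint, hβc]
            · rw [hsd, sum_singleton]; rfl
        rw [hb, card_powersetCard, hαcard]
      rw [Finset.sum_congr rfl hfib, sum_const, hαc5, smul_eq_mul]
    have hsplit := Finset.card_filter_add_card_filter_not
      (s := C) (p := fun δ => δ ∈ M)
    have hejC : e j = (C.filter fun δ => δ ∈ M).card := by
      rw [he j]
      congr 1
      ext δ
      simp only [mem_filter, hCdef, mem_univ, true_and]
      tauto
    have hnon : (C.filter fun δ => ¬ δ ∈ M).card
        = ∑ x ∈ αᶜ, ((lk M (αᶜ.erase x)).filter fun τ => τ.card = j + 1).card := by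
      rw [Finset.card_eq_sum_card_fiberwise
        (f := fun δ => (δ \ α).sum id) (t := αᶜ)
        (fun δ hδ => hfmem δ (Finset.mem_of_mem_filter δ hδ))]
      apply Finset.sum_congr rfl
      intro x hx
      have hxα : x ∉ α := mem_compl.mp hx
      apply Finset.card_bij (fun δ _ => α \ δ)
      · intro δ hδ
        obtain ⟨hδ1, hδf⟩ := mem_filter.mp hδ
        obtain ⟨hδC, hδM⟩ := mem_filter.mp hδ1
        have hδC' := hδC
        rw [hCdef, mem_filter] at hδC'
        obtain ⟨-, hdc, hic⟩ := hδC'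
        obtain ⟨x', hx'α, hx'⟩ := hsingle δ hδC
        rw [hx', sum_singleton] at hδf
        obtain rfl : x' = x := hδf
        have hsd : δ \ α = {x'} := hx'
        have hxδ : x' ∈ δ := (mem_sdiff.mp (hsd ▸ mem_singleton_self x')).1
        have hτα : α \ δ = α \ (δ ∩ α) := by
          ext y; simp only [mem_sdiff, mem_inter]; tauto
        have hτc : (α \ δ).card = j + 1 := by
          rw [hτα, card_sdiff_of_subset inter_subset_right, hαcard, hic]; omega
        have hτne : (α \ δ).Nonempty := by rw [← card_pos, hτc]; omega
        have hδne : δ.Nonempty := ⟨x', hxδ⟩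
        have hδcc : (δᶜ).card = 5 + j := by
          rw [card_compl, Fintype.card_fin, hdc]; omega
        have hδcM : δᶜ ∈ M := hcompl' δ hδne (by rw [← card_pos, hδcc]; omega) hδM
        have hcompl_eq : δᶜ = (αᶜ.erase x') ∪ (α \ δ) := by
          ext y
          simp only [mem_compl, mem_union, mem_erase, mem_compl, mem_sdiff]
          constructor
          · intro hy
            by_cases hyα : y ∈ α
            · exact Or.inr ⟨hyα, hy⟩
            · exact Or.inl ⟨fun h => hy (h ▸ hxδ), hyα⟩
          · rintro (⟨hyx, hyα⟩ | ⟨-, hyδ⟩)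
            · intro hyδ
              have : y ∈ δ \ α := mem_sdiff.mpr ⟨hyδ, hyα⟩
              rw [hsd] at this
              exact hyx (mem_singleton.mp this)
            · exact hyδ
        rw [mem_filter]
        refine ⟨?_, hτc⟩
        simp only [lk, mem_filter]
        refine ⟨?_, ?_, ?_⟩
        · exact hMc.2 δᶜ hδcM _ (by rw [hcompl_eq]; exact subset_union_right) hτne
        · ext y
          simp only [mem_inter, mem_erase, mem_compl, mem_sdiff, notMem_empty, iff_false]
          rintro ⟨⟨-, h1⟩, h2, -⟩
          exact h1 h2
        · rw [← hcompl_eq]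
          exact hδcM
      · intro δ1 h1 δ2 h2 heq
        obtain ⟨h1a, h1f⟩ := mem_filter.mp h1
        obtain ⟨h2a, h2f⟩ := mem_filter.mp h2
        obtain ⟨h1C, -⟩ := mem_filter.mp h1a
        obtain ⟨h2C, -⟩ := mem_filter.mp h2a
        obtain ⟨x1, hx1α, hx1⟩ := hsingle δ1 h1C
        obtain ⟨x2, hx2α, hx2⟩ := hsingle δ2 h2C
        rw [hx1, sum_singleton] at h1f
        rw [hx2, sum_singleton] at h2f
        simp only [id_eq] at h1f h2f
        rw [h1f] at hx1
        rw [h2f] at hx2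
        have hi : α ∩ δ1 = α ∩ δ2 := by
          rw [← sdiff_sdiff_self_left α δ1, ← sdiff_sdiff_self_left α δ2, heq]
        rw [hrebuild δ1 x hx1, hrebuild δ2 x hx2, inter_comm δ1 α, inter_comm δ2 α, hi]
      · intro τ hτ
        obtain ⟨hτlk, hτc⟩ := mem_filter.mp hτ
        have hτα : τ ⊆ α := hfaceα x hx τ hτlk
        simp only [lk, mem_filter] at hτlk
        obtain ⟨hτM, hτd, hτu⟩ := hτlk
        obtain ⟨hint, hsd⟩ := hinsert x hxα (α \ τ) sdiff_subset
        have hxατ : x ∉ α \ τ := fun h => hxα (mem_sdiff.mp h).1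
        have hατc : (α \ τ).card = 6 - j := by
          rw [card_sdiff_of_subset hτα, hαcard, hτc]; omega
        have hδcard : (insert x (α \ τ)).card = 7 - j := by
          rw [card_insert_of_notMem hxατ, hατc]; omega
        have hcompl_eq : (insert x (α \ τ))ᶜ = (αᶜ.erase x) ∪ τ := by
          ext y
          simp only [mem_compl, mem_union, mem_erase, mem_compl, mem_insert, mem_sdiff, not_or]
          constructor
          · rintro ⟨hyx, hy2⟩
            by_cases hyα : y ∈ α
            · right
              by_contra hyτ
              exact hy2 ⟨hyα, hyτ⟩
            · exact Or.inl ⟨hyx, hyα⟩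
          · rintro (⟨hyx, hyα⟩ | hyτ)
            · exact ⟨hyx, fun h => hyα h.1⟩
            · exact ⟨fun h => hxα (h ▸ hτα hyτ), fun h => h.2 hyτ⟩
        have hτnonempty : τ.Nonempty := by rw [← card_pos, hτc]; omega
        have hδnotM : insert x (α \ τ) ∉ M := by
          intro hδM
          have hδcne : ((insert x (α \ τ))ᶜ).Nonempty := by
            obtain ⟨y, hy⟩ := hτnonempty
            exact ⟨y, by rw [hcompl_eq]; exact mem_union_right _ hy⟩
          have := (hcomp _ (insert_nonempty _ _) hδcne).mp hδM
          rw [hcompl_eq] at this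
          exact this hτu
        refine ⟨insert x (α \ τ), ?_, ?_⟩
        · rw [mem_filter]
          refine ⟨?_, by rw [hsd, sum_singleton]; rfl⟩
          rw [mem_filter]
          refine ⟨?_, hδnotM⟩
          rw [hCdef, mem_filter]
          exact ⟨mem_univ _, hδcard, by rw [hint, hατc]⟩
        · ext y
          simp only [mem_sdiff, mem_insert, mem_sdiff, not_or]
          constructor
          · rintro ⟨hyα, hyx, h2⟩
            by_contra hyτ
            exact h2 ⟨hyα, hyτ⟩
          · intro hyτ
            exact ⟨hτα hyτ, fun h => hxα (h ▸ hτα hyτ), fun h => h.2 hyτ⟩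
    rw [hejC, ← hnon]
    exact hsplit.trans hCcard

  have k0 := key 0 (by norm_num)
  have k1 := key 1 (by norm_num)
  have k2 := key 2 (by norm_num)
  norm_num at k0 k1 k2
  rw [show Nat.choose 7 5 = 21 from by decide] at k1
  rw [show Nat.choose 7 4 = 35 from by decide] at k2
  have hrel1 : ∀ x ∈ αᶜ, ((lk M (αᶜ.erase x)).filter fun τ => τ.card = 1).card
      + ((lk M (αᶜ.erase x)).filter fun τ => τ.card = 3).card
      = ((lk M (αᶜ.erase x)).filter fun τ => τ.card = 2).card + 2 :=
    fun x hx => (sphere_nums _ (hsph x hx)).1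
  have hrel2 : ∀ x ∈ αᶜ, 2 * ((lk M (αᶜ.erase x)).filter fun τ => τ.card = 2).card
      = 3 * ((lk M (αᶜ.erase x)).filter fun τ => τ.card = 3).card :=
    fun x hx => (sphere_nums _ (hsph x hx)).2
  have hsum1 : (∑ x ∈ αᶜ, ((lk M (αᶜ.erase x)).filter fun τ => τ.card = 1).card)
      + (∑ x ∈ αᶜ, ((lk M (αᶜ.erase x)).filter fun τ => τ.card = 3).card)
      = (∑ x ∈ αᶜ, ((lk M (αᶜ.erase x)).filter fun τ => τ.card = 2).card) + 10 := by
    rw [← Finset.sum_add_distrib, Finset.sum_congr rfl hrel1, Finset.sum_add_distrib,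
      sum_const, hαc5, smul_eq_mul]
  have hsum2 : 2 * (∑ x ∈ αᶜ, ((lk M (αᶜ.erase x)).filter fun τ => τ.card = 2).card)
      = 3 * (∑ x ∈ αᶜ, ((lk M (αᶜ.erase x)).filter fun τ => τ.card = 3).card) := by
    rw [Finset.mul_sum, Finset.mul_sum]
    exact Finset.sum_congr rfl hrel2
  set S1 := ∑ x ∈ αᶜ, ((lk M (αᶜ.erase x)).filter fun τ => τ.card = 1).card with hS1
  set S2 := ∑ x ∈ αᶜ, ((lk M (αᶜ.erase x)).filter fun τ => τ.card = 2).card with hS2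
  set S3 := ∑ x ∈ αᶜ, ((lk M (αᶜ.erase x)).filter fun τ => τ.card = 3).card with hS3
  refine ⟨he0, ?_, ?_⟩ <;> omega
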